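/- Let ε₀ > 0 be sufficiently small and let a_{i,j} be real numbers (2 ≤ i ≤ d, 0 ≤ j ≤ i) satisfying |a_{2,0}| + |a_{2,2}| + 100^d Σ_{i=3}^{d} Σ_{j=0}^{i} |a_{i,j}| ≤ ε₀, and let a ∈ [-10,10]. Define F(θ) = (a_{2,0} + Σ_{i=3}^{d} a_{i,i−2} a^{i−2}) cos²θ + (1 + Σ_{i=3}^{d} (i−1) a_{i,i−1} a^{i−2}) sinθ cosθ + (a_{2,2} + Σ_{i=3}^{d} (i(i−1)/2) a_{i,i} a^{i−2}) sin²θ. Then F'(θ) ≥ 1/2 for every θ with |θ| ≤ ε₀^{1/2}. -/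

import Mathlib

noncomputable section

/-- Coefficient smallness condition
`|a₂₀| + |a₂₂| + 100^d Σ_{i=3}^d Σ_{j=0}^i |a_{i,j}| ≤ ε₀`. -/
def CoeffSmall (d : ℕ) (ε₀ : ℝ) (a : ℕ → ℕ → ℝ) : Prop :=
  |a 2 0| + |a 2 2| +
      100 ^ d * ∑ i ∈ Finset.Icc 3 d, ∑ j ∈ Finset.range (i + 1), |a i j| ≤ ε₀

/-- The coefficient of `ξ²` after translating `(0,a)` to the origin and rotating by `θ`:
`F(θ) = (a₂₀ + Σ a_{i,i-2} a^{i-2}) cos²θ + (1 + Σ (i-1)a_{i,i-1} a^{i-2}) sinθcosθ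
       + (a₂₂ + Σ (i(i-1)/2) a_{i,i} a^{i-2}) sin²θ`. -/
def Fcoef (d : ℕ) (a : ℕ → ℕ → ℝ) (t θ : ℝ) : ℝ :=
  (a 2 0 + ∑ i ∈ Finset.Icc 3 d, a i (i - 2) * t ^ (i - 2)) * Real.cos θ ^ 2 +
    (1 + ∑ i ∈ Finset.Icc 3 d, ((i : ℝ) - 1) * a i (i - 1) * t ^ (i - 2)) *
      Real.sin θ * Real.cos θ +
    (a 2 2 + ∑ i ∈ Finset.Icc 3 d, ((i : ℝ) * ((i : ℝ) - 1) / 2) * a i i * t ^ (i - 2)) *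
      Real.sin θ ^ 2

/-!
Writing `F θ = A cos² θ + B sin θ cos θ + C sin² θ`, one has `F' θ = B cos 2θ + (C - A) sin 2θ`.
Since `|t| ≤ 10`, the weight `|c_i| |t|^(i-2) ≤ i² 10^(i-2)` of every `a_{i,j}` in `A`, `B`, `C`
is at most `100^d`, so the smallness condition gives `|A|, |B - 1|, |C| ≤ ε₀`, while
`sin² θ ≤ θ² ≤ ε₀`. Hence `F' θ ≥ (1 - ε₀)(1 - 2ε₀) - 2ε₀ ≥ 1/2` once `ε₀ ≤ 1/100`.
-/

open Finset Real

lemma hasDerivAt_trig_quadratic (A B C θ : ℝ) :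
    HasDerivAt (fun x => A * cos x ^ 2 + B * sin x * cos x + C * sin x ^ 2)
      (B * cos (2 * θ) + (C - A) * sin (2 * θ)) θ := by
  have h := ((((hasDerivAt_cos θ).pow 2).const_mul A).add
    (((hasDerivAt_sin θ).const_mul B).mul (hasDerivAt_cos θ))).add
      (((hasDerivAt_sin θ).pow 2).const_mul C)
  refine h.congr_deriv ?_
  rw [cos_two_mul', sin_two_mul]
  push_cast
  ring

lemma half_le_trig_quadratic_deriv {ε A B C θ : ℝ} (hε : ε ≤ 1 / 100)
    (hA : |A| ≤ ε) (hB : |B - 1| ≤ ε) (hC : |C| ≤ ε) (hsin : sin θ ^ 2 ≤ ε) :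
    1 / 2 ≤ B * cos (2 * θ) + (C - A) * sin (2 * θ) := by
  have hcos : 1 - 2 * ε ≤ cos (2 * θ) := by rw [cos_two_mul']; linarith [cos_sq_add_sin_sq θ]
  have hBlow : 1 - ε ≤ B := by linarith [(abs_le.mp hB).1]
  have hCA : |(C - A) * sin (2 * θ)| ≤ 2 * ε := by
    rw [abs_mul]
    calc |C - A| * |sin (2 * θ)| ≤ 2 * ε * 1 :=
          mul_le_mul (by linarith [abs_sub C A]) (abs_sin_le_one _) (abs_nonneg _)
            (by linarith [abs_nonneg A])
      _ = 2 * ε := mul_one _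
  have hBcos : (1 - ε) * (1 - 2 * ε) ≤ B * cos (2 * θ) :=
    mul_le_mul hBlow hcos (by linarith) (by linarith)
  nlinarith [(abs_le.mp hCA).1, abs_nonneg A]

lemma sq_le_ten_pow (n : ℕ) : (n : ℝ) ^ 2 ≤ 10 ^ n := by
  have h2 : (n : ℝ) ≤ 2 ^ n := by exact_mod_cast Nat.lt_two_pow_self.le
  calc (n : ℝ) ^ 2 ≤ ((2 : ℝ) ^ n) ^ 2 := pow_le_pow_left₀ n.cast_nonneg h2 2
    _ = 4 ^ n := by rw [← pow_mul, mul_comm, pow_mul]; norm_num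
    _ ≤ 10 ^ n := pow_le_pow_left₀ (by norm_num) (by norm_num) n

lemma abs_mul_pow_le_hundred_pow {c t : ℝ} {i d : ℕ} (hid : i ≤ d) (hc : |c| ≤ (i : ℝ) ^ 2)
    (ht : |t| ≤ 10) : |c| * |t| ^ (i - 2) ≤ 100 ^ d :=
  calc |c| * |t| ^ (i - 2) ≤ 10 ^ d * 10 ^ d :=
        mul_le_mul
          (hc.trans ((sq_le_ten_pow i).trans (pow_le_pow_right₀ (by norm_num) hid)))
          ((pow_le_pow_left₀ (abs_nonneg t) ht _).trans
            (pow_le_pow_right₀ (by norm_num) ((Nat.sub_le i 2).trans hid)))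
          (by positivity) (by positivity)
    _ = 100 ^ d := by rw [← mul_pow]; norm_num

section WeightedSum

variable {d : ℕ} {a : ℕ → ℕ → ℝ} {t : ℝ} (c : ℕ → ℝ) (j : ℕ → ℕ)

lemma abs_weighted_sum_le (ht : |t| ≤ 10) (hj : ∀ i ∈ Icc 3 d, j i ≤ i)
    (hc : ∀ i ∈ Icc 3 d, |c i| ≤ (i : ℝ) ^ 2) :
    |∑ i ∈ Icc 3 d, c i * a i (j i) * t ^ (i - 2)| ≤
      100 ^ d * ∑ i ∈ Icc 3 d, ∑ k ∈ range (i + 1), |a i k| := by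
  rw [mul_sum]
  refine (abs_sum_le_sum_abs _ _).trans (sum_le_sum fun i hi => ?_)
  have hrow : |a i (j i)| ≤ ∑ k ∈ range (i + 1), |a i k| :=
    single_le_sum (fun k _ => abs_nonneg (a i k)) (mem_range.mpr (Nat.lt_succ_of_le (hj i hi)))
  calc |c i * a i (j i) * t ^ (i - 2)| = |c i| * |t| ^ (i - 2) * |a i (j i)| := by
        rw [abs_mul, abs_mul, abs_pow]; ring
    _ ≤ 100 ^ d * ∑ k ∈ range (i + 1), |a i k| :=
        mul_le_mul (abs_mul_pow_le_hundred_pow (mem_Icc.mp hi).2 (hc i hi) ht) hrow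
          (abs_nonneg _) (by positivity)

lemma CoeffSmall.abs_add_weighted_sum_le {ε : ℝ} (ha : CoeffSmall d ε a) (ht : |t| ≤ 10)
    (hj : ∀ i ∈ Icc 3 d, j i ≤ i) (hc : ∀ i ∈ Icc 3 d, |c i| ≤ (i : ℝ) ^ 2)
    (x : ℝ) (hx : |x| ≤ |a 2 0| + |a 2 2|) :
    |x + ∑ i ∈ Icc 3 d, c i * a i (j i) * t ^ (i - 2)| ≤ ε := by
  have hsum := abs_weighted_sum_le (a := a) c j ht hj hc
  unfold CoeffSmall at ha
  linarith [abs_add_le x (∑ i ∈ Icc 3 d, c i * a i (j i) * t ^ (i - 2))]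

end WeightedSum

theorem statement4 (d : ℕ) :
    ∃ ε₀' > (0 : ℝ), ∀ ε₀ : ℝ, 0 < ε₀ → ε₀ ≤ ε₀' →
      ∀ a : ℕ → ℕ → ℝ, CoeffSmall d ε₀ a →
        ∀ t : ℝ, |t| ≤ 10 →
          ∀ θ : ℝ, |θ| ≤ Real.sqrt ε₀ →
            1 / 2 ≤ deriv (Fcoef d a t) θ := by
  refine ⟨1 / 100, by norm_num, fun ε hε hε' a ha t ht θ hθ => ?_⟩
  have hsin : sin θ ^ 2 ≤ ε := by
    have hθ2 := (Real.le_sqrt (abs_nonneg θ) hε.le).mp hθ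
    rw [sq_abs] at hθ2
    exact sin_sq_le_sq.trans hθ2
  have hi : ∀ i ∈ Icc 3 d, (3 : ℝ) ≤ i := fun i hi => by exact_mod_cast (mem_Icc.mp hi).1
  have hA := ha.abs_add_weighted_sum_le (fun _ => 1) (· - 2) ht (fun i _ => Nat.sub_le i 2)
    (fun i hi' => by have := hi i hi'; rw [abs_one]; nlinarith)
    (a 2 0) (le_add_of_nonneg_right (abs_nonneg _))
  have hB := ha.abs_add_weighted_sum_le (fun i => (i : ℝ) - 1) (· - 1) ht
    (fun i _ => Nat.sub_le i 1)
    (fun i hi' => by have := hi i hi'; rw [abs_of_nonneg (by linarith)]; nlinarith)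
    0 (by rw [abs_zero]; positivity)
  have hC := ha.abs_add_weighted_sum_le (fun i => (i : ℝ) * ((i : ℝ) - 1) / 2) id ht
    (fun i _ => le_rfl)
    (fun i hi' => by have := hi i hi'; rw [abs_of_nonneg (by nlinarith)]; nlinarith)
    (a 2 2) (le_add_of_nonneg_left (abs_nonneg _))
  rw [HasDerivAt.deriv (f := Fcoef d a t) (hasDerivAt_trig_quadratic _ _ _ θ)]
  refine half_le_trig_quadratic_deriv hε' (by simpa using hA) ?_ (by simpa using hC) hsin
  simpa using hB
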